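/- arXiv:2504.21058 — 2 statements merged into one kernel-verified Lean document; each statement's English description precedes it below -/
import Mathlib

section
/- Assume k is algebraically closed with char k not dividing 2n. Let γ : Z(n) → Ẑ(n) be an additive map satisfying γ(i)(j) = γ(j)(i) for all i,j ∈ Z(n). Then there exists a map s : Z(n) → kˣ such that s(i)² = γ(i)(i) and s(i+j) = s(i)·s(j)·γ(i)(j) for all i,j ∈ Z(n); equivalently, the map i ↦ (s(i), i, γ(i)) is a group homomorphism from Z(n) to G(n) whose image consists of symmetric elements of G(n). -/
/-!
Write `b(i, j) = γ(i)(j)`. Being symmetric and bimultiplicative, `b` is a symmetric 2-cocycle, so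
`D × A` with `(c, i)(c', j) = (c c' b(i, j), i + j)` is an abelian extension of `A` by `D = kˣ`.
As `kˣ` is divisible, hence an injective `ℤ`-module, the extension splits, and a retraction `ρ`
gives `q(i) = ρ(1, i)⁻¹` with `q(i + j) = q(i) q(j) b(i, j)`. The defect `q(i)² / b(i, i)` is then a
character of `A` trivial on the `2`-torsion, so by injectivity again it equals `μ(2i)` for some
character `μ`, and `s = q μ⁻¹` also satisfies `s(i)² = b(i, i)`.
-/

namespace ThetaPaper

variable {g n : ℕ} {k : Type*} [Field k]

/-- `Z(n) = (ℤ/nℤ)^g`. -/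
abbrev ZGrp (g n : ℕ) := Fin g → ZMod n

/-- `Ẑ(n) = Hom(Z(n), kˣ)`, the group of `kˣ`-valued characters of `Z(n)`,
written additively. -/
abbrev ZHat (g n : ℕ) (k : Type*) [Field k] := AddChar (ZGrp g n) kˣ

/-- `K(n) = Z(n) × Ẑ(n)`. -/
abbrev KGrp (g n : ℕ) (k : Type*) [Field k] := ZGrp g n × ZHat g n k

/-- The commutator pairing `e_n((x₁,y₁),(x₂,y₂)) = y₁(x₂)·y₂(x₁)⁻¹`. -/
def en (v w : KGrp g n k) : kˣ := v.2 w.1 * (w.2 v.1)⁻¹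

/-- The level-`n` Heisenberg group `G(n)`, as the set `kˣ × Z(n) × Ẑ(n)`. -/
@[ext]
structure Heis (g n : ℕ) (k : Type*) [Field k] where
  t : kˣ
  x : ZGrp g n
  y : ZHat g n k

namespace Heis

/-- The Heisenberg multiplication
`(α₁,x₁,y₁)·(α₂,x₂,y₂) = (α₁α₂·y₂(x₁), x₁+x₂, y₁+y₂)`. -/
instance : Mul (Heis g n k) :=
  ⟨fun a b => ⟨a.t * b.t * b.y a.x, a.x + b.x, a.y + b.y⟩⟩

instance : One (Heis g n k) := ⟨⟨1, 0, 0⟩⟩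

instance : Inv (Heis g n k) :=
  ⟨fun a => ⟨a.t⁻¹ * a.y a.x, -a.x, -a.y⟩⟩

@[simp] lemma mul_t (a b : Heis g n k) : (a * b).t = a.t * b.t * b.y a.x := rfl
@[simp] lemma mul_x (a b : Heis g n k) : (a * b).x = a.x + b.x := rfl
@[simp] lemma mul_y (a b : Heis g n k) : (a * b).y = a.y + b.y := rfl
@[simp] lemma one_t : (1 : Heis g n k).t = 1 := rfl
@[simp] lemma one_x : (1 : Heis g n k).x = 0 := rfl
@[simp] lemma one_y : (1 : Heis g n k).y = 0 := rfl
@[simp] lemma inv_t (a : Heis g n k) : a⁻¹.t = a.t⁻¹ * a.y a.x := rfl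
@[simp] lemma inv_x (a : Heis g n k) : a⁻¹.x = -a.x := rfl
@[simp] lemma inv_y (a : Heis g n k) : a⁻¹.y = -a.y := rfl

instance : Group (Heis g n k) :=
  Group.ofLeftAxioms
    (fun a b c => by
      ext <;>
        simp [AddChar.map_add_eq_mul, mul_assoc, mul_comm, mul_left_comm, add_assoc])
    (fun a => by ext <;> simp)
    (fun a => by
      ext <;> simp [AddChar.map_neg_eq_inv, mul_comm, mul_left_comm, mul_assoc])

/-- The canonical projection `π : G(n) → K(n)`, `(α,x,y) ↦ (x,y)`. -/
def toK (h : Heis g n k) : KGrp g n k := (h.x, h.y)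

/-- The automorphism `D₋₁ : (α,x,y) ↦ (α,−x,−y)`. -/
def Dneg (h : Heis g n k) : Heis g n k := ⟨h.t, -h.x, -h.y⟩

/-- A symmetric element of the Heisenberg group: `D₋₁(h) = h⁻¹`. -/
def IsSymElem (h : Heis g n k) : Prop := Dneg h = h⁻¹

end Heis

/-- The `ψ`-semi-character identity:
`χ(v+w) = χ(v)·χ(w)·[ψ(w)₂(ψ(v)₁)]·[w₂(v₁)]⁻¹`. -/
def IsSemiChar (ψ : KGrp g n k → KGrp g n k) (χ : KGrp g n k → kˣ) : Prop :=
  ∀ v w : KGrp g n k,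
    χ (v + w) = χ v * χ w * (ψ w).2 (ψ v).1 * ((w.2 v.1)⁻¹ : kˣ)

/-- A symmetric (semi-)character: `χ(−v) = χ(v)`. -/
def IsSymmChar (χ : KGrp g n k → kˣ) : Prop := ∀ v : KGrp g n k, χ (-v) = χ v

/-- `ψ̄ ∈ Sp(K(n))`: an additive automorphism preserving the pairing `e_n`. -/
def IsSymplectic (ψ : KGrp g n k ≃+ KGrp g n k) : Prop :=
  ∀ v w : KGrp g n k, en (ψ v) (ψ w) = en v w

theorem _root_.IsAlgClosed.baer_additive_units (k : Type*) [Field k] [IsAlgClosed k] :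
    Module.Baer ℤ (Additive kˣ) := by
  have hroot {m : ℕ} (hm : m ≠ 0) : Function.Surjective fun a : Additive kˣ => m • a := by
    intro a
    obtain ⟨z, hz⟩ := IsAlgClosed.exists_pow_nat_eq (a.toMul : k) (Nat.pos_of_ne_zero hm)
    have hz0 : z ≠ 0 := by
      rintro rfl
      exact a.toMul.ne_zero (by rw [← hz, zero_pow hm])
    exact ⟨.ofMul (Units.mk0 z hz0), Additive.toMul.injective (Units.ext hz)⟩
  let _ : DivisibleBy (Additive kˣ) ℕ := divisibleByOfSMulRightSurj _ _ hroot
  let _ := AddGroup.divisibleByIntOfDivisibleByNat (Additive kˣ)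
  exact Module.Baer.of_divisible _

theorem _root_.Module.Baer.exists_monoidHom_retraction {D E : Type*}
    [CommGroup D] [CommGroup E]
    (hD : Module.Baer ℤ (Additive D)) (ι : D →* E) (hι : Function.Injective ι) :
    ∃ ρ : E →* D, ∀ c, ρ (ι c) = c := by
  obtain ⟨r, hr⟩ := hD.extension_property_addMonoidHom ι.toAdditive hι (.id _)
  exact ⟨r.toMultiplicative, fun c => congrArg Additive.toMul (DFunLike.congr_fun hr (.ofMul c))⟩

theorem _root_.AddChar.exists_map_nsmul_eq {A D : Type*} [AddCommGroup A] [CommGroup D]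
    (hD : Module.Baer ℤ (Additive D)) (m : ℕ) (χ : AddChar A D)
    (hχ : ∀ a, m • a = 0 → χ a = 1) : ∃ μ : AddChar A D, ∀ a, μ (m • a) = χ a := by
  let d : A →+ A := nsmulAddMonoidHom m
  have hker : d.ker ≤ χ.toAddMonoidHom.ker := fun a ha => by simp [hχ a ha]
  obtain ⟨φ, hφ⟩ := hD.extension_property_addMonoidHom (QuotientAddGroup.kerLift d)
    (QuotientAddGroup.kerLift_injective d) (QuotientAddGroup.lift d.ker χ.toAddMonoidHom hker)
  refine ⟨AddChar.toAddMonoidHomEquiv.symm φ, fun a => ?_⟩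
  exact congrArg Additive.toMul (DFunLike.congr_fun hφ (a : A ⧸ d.ker))

section QuadraticRefinement

variable {A D : Type*} [AddCommGroup A] [CommGroup D]

@[ext]
structure TwistedProd (γ : A →+ AddChar A D) where
  c : D
  a : A

namespace TwistedProd

variable {γ : A →+ AddChar A D}

instance : Mul (TwistedProd γ) := ⟨fun x y => ⟨x.c * y.c * γ x.a y.a, x.a + y.a⟩⟩

instance : One (TwistedProd γ) := ⟨⟨1, 0⟩⟩

instance : Inv (TwistedProd γ) := ⟨fun x => ⟨x.c⁻¹ * γ x.a x.a, -x.a⟩⟩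

@[simp] lemma mul_c (x y : TwistedProd γ) : (x * y).c = x.c * y.c * γ x.a y.a := rfl
@[simp] lemma mul_a (x y : TwistedProd γ) : (x * y).a = x.a + y.a := rfl
@[simp] lemma one_c : (1 : TwistedProd γ).c = 1 := rfl
@[simp] lemma one_a : (1 : TwistedProd γ).a = 0 := rfl
@[simp] lemma inv_c (x : TwistedProd γ) : x⁻¹.c = x.c⁻¹ * γ x.a x.a := rfl
@[simp] lemma inv_a (x : TwistedProd γ) : x⁻¹.a = -x.a := rfl

instance : Group (TwistedProd γ) :=
  Group.ofLeftAxioms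
    (fun x y z => by
      ext
      · simp only [mul_c, mul_a, map_add, AddChar.add_apply, AddChar.map_add_eq_mul]
        simp only [mul_assoc, mul_comm, mul_left_comm]
      · exact add_assoc _ _ _)
    (fun x => by ext <;> simp)
    (fun x => by ext <;> simp [AddChar.map_neg_eq_inv])

abbrev commGroup (hγ : ∀ i j, γ i j = γ j i) : CommGroup (TwistedProd γ) :=
  { instGroup with
    mul_comm x y := by
      ext
      · rw [mul_c, mul_c, hγ x.a, mul_comm x.c]
      · exact add_comm _ _ }

def inl : D →* TwistedProd γ where
  toFun c := ⟨c, 0⟩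
  map_one' := rfl
  map_mul' c d := by ext <;> simp

lemma inl_injective : Function.Injective (inl : D →* TwistedProd γ) :=
  fun _ _ h => congrArg TwistedProd.c h

lemma mk_one_mul_mk_one (i j : A) :
    (⟨1, i⟩ : TwistedProd γ) * ⟨1, j⟩ = inl (γ i j) * ⟨1, i + j⟩ := by
  ext <;> simp [inl]

end TwistedProd

def IsQuadraticRefinement (γ : A →+ AddChar A D) (q : A → D) : Prop :=
  ∀ i j, q (i + j) = q i * q j * γ i j

theorem exists_isQuadraticRefinement (hD : Module.Baer ℤ (Additive D))
    (γ : A →+ AddChar A D) (hγ : ∀ i j, γ i j = γ j i) :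
    ∃ q : A → D, IsQuadraticRefinement γ q := by
  let _ : CommGroup (TwistedProd γ) := TwistedProd.commGroup hγ
  obtain ⟨ρ, hρ⟩ :=
    hD.exists_monoidHom_retraction (E := TwistedProd γ) TwistedProd.inl TwistedProd.inl_injective
  refine ⟨fun i => (ρ ⟨1, i⟩)⁻¹, fun i j => ?_⟩
  have h := congrArg ρ (TwistedProd.mk_one_mul_mk_one (γ := γ) i j)
  rw [map_mul, map_mul, hρ] at h
  have h' : ρ ⟨1, i + j⟩ = ρ ⟨1, i⟩ * ρ ⟨1, j⟩ * (γ i j)⁻¹ :=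
    eq_mul_inv_of_mul_eq (h.trans (mul_comm _ _)).symm
  simp only [h', mul_inv, inv_inv]

namespace IsQuadraticRefinement

variable {γ : A →+ AddChar A D} {q : A → D}

lemma map_zero (hq : IsQuadraticRefinement γ q) : q 0 = 1 := by
  simpa using hq 0 0

lemma mul_addChar (hq : IsQuadraticRefinement γ q) (μ : AddChar A D) :
    IsQuadraticRefinement γ (fun i => q i * μ i) := fun i j => by
  dsimp only
  rw [hq, AddChar.map_add_eq_mul]
  simp only [mul_assoc, mul_comm, mul_left_comm]

def defect (hq : IsQuadraticRefinement γ q) (hγ : ∀ i j, γ i j = γ j i) : AddChar A D where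
  toFun i := q i ^ 2 / γ i i
  map_zero_eq_one' := by simp [hq.map_zero]
  map_add_eq_mul' i j := by
    simp only [hq i j, map_add, AddChar.add_apply, AddChar.map_add_eq_mul, hγ j i]
    apply Additive.ofMul.injective
    simp only [ofMul_mul, ofMul_div, ofMul_pow]
    abel

lemma defect_apply (hq : IsQuadraticRefinement γ q) (hγ : ∀ i j, γ i j = γ j i) (i : A) :
    hq.defect hγ i = q i ^ 2 / γ i i := rfl

lemma defect_eq_one_of_two_nsmul_eq_zero (hq : IsQuadraticRefinement γ q)
    (hγ : ∀ i j, γ i j = γ j i) {i : A} (hi : 2 • i = 0) : hq.defect hγ i = 1 := by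
  have h1 := hq i i
  rw [← two_nsmul, hi, hq.map_zero] at h1
  have h2 : γ i i ^ 2 = 1 := by rw [← AddChar.map_nsmul_eq_pow, hi, AddChar.map_zero_eq_one]
  have h3 : q i ^ 2 = (γ i i)⁻¹ := eq_inv_of_mul_eq_one_left (by rw [sq, ← h1])
  rw [defect_apply, h3, div_eq_mul_inv, ← mul_inv, ← sq, h2, inv_one]

end IsQuadraticRefinement

theorem exists_isQuadraticRefinement_sq_eq (hD : Module.Baer ℤ (Additive D))
    (γ : A →+ AddChar A D) (hγ : ∀ i j, γ i j = γ j i) :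
    ∃ q : A → D, IsQuadraticRefinement γ q ∧ ∀ i, q i ^ 2 = γ i i := by
  obtain ⟨q, hq⟩ := exists_isQuadraticRefinement hD γ hγ
  obtain ⟨μ, hμ⟩ := AddChar.exists_map_nsmul_eq hD 2 (hq.defect hγ)
    fun _ hi => hq.defect_eq_one_of_two_nsmul_eq_zero hγ hi
  refine ⟨fun i => q i * μ⁻¹ i, hq.mul_addChar μ⁻¹, fun i => ?_⟩
  rw [mul_pow, AddChar.inv_apply', inv_pow, ← AddChar.map_nsmul_eq_pow, hμ, hq.defect_apply,
    ← div_eq_mul_inv, div_div_cancel]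

end QuadraticRefinement

lemma Heis.isSymElem_iff (h : Heis g n k) :
    h.IsSymElem ↔ h.t ^ 2 = h.y h.x := by
  rw [Heis.IsSymElem, Heis.Dneg, Heis.ext_iff, sq, ← eq_inv_mul_iff_mul_eq]
  simp

theorem consistent_square_roots_general (g n : ℕ)
    (k : Type*) [Field k] [IsAlgClosed k]
    (γ : ZGrp g n →+ ZHat g n k)
    (hγ : ∀ i j : ZGrp g n, γ i j = γ j i) :
    ∃ s : ZGrp g n → kˣ,
      (∀ i, s i ^ 2 = γ i i) ∧
      (∀ i j, s (i + j) = s i * s j * γ i j) ∧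
      (∀ i j, (⟨s (i + j), i + j, γ (i + j)⟩ : Heis g n k) =
        (⟨s i, i, γ i⟩ : Heis g n k) * ⟨s j, j, γ j⟩) ∧
      (∀ i, Heis.IsSymElem (⟨s i, i, γ i⟩ : Heis g n k)) := by
  obtain ⟨s, hs, hsq⟩ :=
    exists_isQuadraticRefinement_sq_eq (IsAlgClosed.baer_additive_units k) γ hγ
  refine ⟨s, hsq, hs, fun i j => ?_, fun i => (Heis.isSymElem_iff _).2 (hsq i)⟩
  refine Heis.ext ?_ rfl (map_add γ i j)
  simp [hs i j, hγ j i]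

/-- over an algebraically closed field of characteristic not dividing
`2n`, any symmetric additive map `γ : Z(n) → Ẑ(n)` admits a consistent system of
square roots `s(i)` of `γ(i)(i)`; equivalently `i ↦ (s(i), i, γ(i))` is a group
homomorphism `Z(n) → G(n)` with symmetric image. -/
theorem consistent_square_roots (g n : ℕ) (hg : 1 ≤ g) (hn : 1 ≤ n)
    (k : Type*) [Field k] [IsAlgClosed k] (hchar : ((2 * n : ℕ) : k) ≠ 0)
    (γ : ZGrp g n →+ ZHat g n k)
    (hγ : ∀ i j : ZGrp g n, γ i j = γ j i) :
    ∃ s : ZGrp g n → kˣ,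
      (∀ i, s i ^ 2 = γ i i) ∧
      (∀ i j, s (i + j) = s i * s j * γ i j) ∧
      (∀ i j, (⟨s (i + j), i + j, γ (i + j)⟩ : Heis g n k) =
        (⟨s i, i, γ i⟩ : Heis g n k) * ⟨s j, j, γ j⟩) ∧
      (∀ i, Heis.IsSymElem (⟨s i, i, γ i⟩ : Heis g n k)) :=
  consistent_square_roots_general g n k γ hγ

end ThetaPaper
end

section
/- Assume k contains a primitive n-th root of unity and char k does not divide n. Let ψ̄ ∈ Sp(K(n)) and let χ₁, χ₂ be two symmetric ψ̄-semi-characters. Then the ratio χ₁·χ₂⁻¹ : K(n) → kˣ is a group homomorphism taking values in {±1}, and there exists c ∈ K(n) with 2c = 0 such that χ₁(v) = χ₂(v)·e_n(c, v) for all v ∈ K(n). In particular, if n is odd then χ₁ = χ₂, so for odd n there is a unique symmetric ψ̄-semi-character. -/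
/-! The cross term of the semi-character identity depends only on `ψ̄`, so `ρ = χ₁ / χ₂` is a
character of `K(n)`, and symmetry gives `ρ v = ρ (-v) = (ρ v)⁻¹`, i.e. `ρ² = 1`. With enough
`n`-th roots of unity in `k`, `e_n` is nondegenerate and `K(n)` has as many characters as
elements, so `c ↦ e_n(c, ·)` is a bijection onto the characters of `K(n)`. Hence `ρ = e_n(c, ·)`,
injectivity turns `e_n(2c, ·) = ρ² = 1` into `2c = 0`, and for odd `n` the element `c`, killed by
both `2` and `n`, vanishes. -/

namespace AddChar

variable {A M : Type*} [AddCommGroup A] [Finite A] [CommMonoid M]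
  [HasEnoughRootsOfUnity M (AddMonoid.exponent A)]

instance finite_of_hasEnoughRootsOfUnity : Finite (AddChar A Mˣ) :=
  have : HasEnoughRootsOfUnity M (Monoid.exponent (Multiplicative A)) := ‹_›
  .of_equiv _ toMonoidHomEquiv.symm

variable (M) in
lemma exists_apply_ne_one_of_hasEnoughRootsOfUnity {a : A} (ha : a ≠ 0) :
    ∃ φ : AddChar A Mˣ, φ a ≠ 1 := by
  have : HasEnoughRootsOfUnity M (Monoid.exponent (Multiplicative A)) := ‹_›
  obtain ⟨φ, hφ⟩ := CommGroup.exists_apply_ne_one_of_hasEnoughRootsOfUnity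
    (Multiplicative A) M (a := .ofAdd a) ha
  exact ⟨toMonoidHomEquiv.symm φ, hφ⟩

variable (A M) in
lemma card_eq_of_hasEnoughRootsOfUnity : Nat.card (AddChar A Mˣ) = Nat.card A := by
  have : HasEnoughRootsOfUnity M (Monoid.exponent (Multiplicative A)) := ‹_›
  rw [Nat.card_congr toMonoidHomEquiv, CommGroup.card_monoidHom_of_hasEnoughRootsOfUnity]
  rfl

end AddChar

lemma AddChar.sq_eq_one_of_map_neg {A G : Type*} [AddGroup A] [CommGroup G] (φ : AddChar A G)
    {a : A} (ha : φ (-a) = φ a) : φ a ^ 2 = 1 := by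
  rw [sq]
  nth_rewrite 1 [← ha]
  rw [← map_add_eq_mul, neg_add_cancel, map_zero_eq_one]

lemma Units.sq_eq_one_iff {R : Type*} [Ring R] [NoZeroDivisors R] {u : Rˣ} :
    u ^ 2 = 1 ↔ u = 1 ∨ u = -1 := by
  simp only [Units.ext_iff, Units.val_pow_eq_pow_val, Units.val_one, Units.val_neg]
  exact _root_.sq_eq_one_iff

namespace ThetaPaper

variable {g n : ℕ} {k : Type*} [Field k]

lemma nsmul_zGrp_eq_zero (x : ZGrp g n) : n • x = 0 := by
  ext; simp

lemma nsmul_kGrp_eq_zero (v : KGrp g n k) : n • v = 0 := by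
  refine Prod.ext (nsmul_zGrp_eq_zero v.1) (AddChar.ext _ _ fun x => ?_)
  change (n • v.2) x = 1
  rw [AddChar.nsmul_apply, ← AddChar.map_nsmul_eq_pow, nsmul_zGrp_eq_zero,
    AddChar.map_zero_eq_one]

@[simp] lemma en_zero_left (v : KGrp g n k) : en 0 v = 1 := by
  simp [en]

lemma en_add_left (c d v : KGrp g n k) : en (c + d) v = en c v * en d v := by
  simp only [en, Prod.fst_add, Prod.snd_add, AddChar.add_apply, AddChar.map_add_eq_mul, mul_inv]
  exact mul_mul_mul_comm ..

lemma en_add_right (c v w : KGrp g n k) : en c (v + w) = en c v * en c w := by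
  simp only [en, Prod.fst_add, Prod.snd_add, AddChar.add_apply, AddChar.map_add_eq_mul, mul_inv]
  exact mul_mul_mul_comm ..

def enChar (c : KGrp g n k) : AddChar (KGrp g n k) kˣ where
  toFun := en c
  map_zero_eq_one' := by simp [en]
  map_add_eq_mul' := en_add_right c

@[simp] lemma enChar_apply (c v : KGrp g n k) : enChar c v = en c v := rfl

section EnoughRootsOfUnity

variable [NeZero n] [HasEnoughRootsOfUnity k n]

instance : HasEnoughRootsOfUnity k (AddMonoid.exponent (ZGrp g n)) :=
  .of_dvd k <| AddMonoid.exponent_dvd_of_forall_nsmul_eq_zero nsmul_zGrp_eq_zero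

instance : HasEnoughRootsOfUnity k (AddMonoid.exponent (KGrp g n k)) :=
  .of_dvd k <| AddMonoid.exponent_dvd_of_forall_nsmul_eq_zero nsmul_kGrp_eq_zero

lemma enChar_injective : Function.Injective (enChar : KGrp g n k → AddChar (KGrp g n k) kˣ) := by
  intro c d hcd
  have hen v : en c v = en d v := DFunLike.congr_fun hcd v
  refine Prod.ext ?_ (AddChar.ext _ _ fun x => by simpa [en] using hen (x, 0))
  by_contra hne
  obtain ⟨y, hy⟩ := AddChar.exists_apply_ne_one_of_hasEnoughRootsOfUnity k (sub_ne_zero.mpr hne)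
  refine hy ?_
  simpa [en, AddChar.map_sub_eq_div, div_eq_one] using hen (0, y)

lemma enChar_bijective : Function.Bijective (enChar : KGrp g n k → AddChar (KGrp g n k) kˣ) :=
  -- instance search does not see through `Prod.instAddMonoid` to the `AddCommGroup` here
  have : Finite (AddChar (KGrp g n k) kˣ) :=
    AddChar.finite_of_hasEnoughRootsOfUnity (A := KGrp g n k)
  (Nat.bijective_iff_injective_and_card _).mpr
    ⟨enChar_injective, (AddChar.card_eq_of_hasEnoughRootsOfUnity (KGrp g n k) k).symm⟩

end EnoughRootsOfUnity

namespace IsSemiChar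

variable {ψ : KGrp g n k → KGrp g n k} {χ₁ χ₂ : KGrp g n k → kˣ}

lemma mul_inv_map_add (h₁ : IsSemiChar ψ χ₁) (h₂ : IsSemiChar ψ χ₂) (v w : KGrp g n k) :
    χ₁ (v + w) * (χ₂ (v + w))⁻¹ = χ₁ v * (χ₂ v)⁻¹ * (χ₁ w * (χ₂ w)⁻¹) := by
  simp only [← div_eq_mul_inv]
  rw [h₁, h₂, mul_assoc (χ₁ v * χ₁ w), mul_assoc (χ₂ v * χ₂ w), mul_div_mul_right_eq_div,
    mul_div_mul_comm]

def ratio (h₁ : IsSemiChar ψ χ₁) (h₂ : IsSemiChar ψ χ₂) : AddChar (KGrp g n k) kˣ :=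
  AddChar.toMonoidHomEquiv.symm <|
    MonoidHom.mk' (fun v => χ₁ v.toAdd * (χ₂ v.toAdd)⁻¹) (h₁.mul_inv_map_add h₂)

lemma ratio_apply (h₁ : IsSemiChar ψ χ₁) (h₂ : IsSemiChar ψ χ₂) (v : KGrp g n k) :
    h₁.ratio h₂ v = χ₁ v * (χ₂ v)⁻¹ := rfl

end IsSemiChar

theorem symmetric_semichars_differ_by_two_torsion_general (g n : ℕ) (hn : 1 ≤ n)
    (k : Type*) [Field k] (ζ : k) (hζ : IsPrimitiveRoot ζ n)
    (ψ : KGrp g n k ≃+ KGrp g n k)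
    (χ₁ χ₂ : KGrp g n k → kˣ)
    (h₁ : IsSemiChar (⇑ψ) χ₁) (h₂ : IsSemiChar (⇑ψ) χ₂)
    (hs₁ : IsSymmChar χ₁) (hs₂ : IsSymmChar χ₂) :
    (∀ v w : KGrp g n k,
      χ₁ (v + w) * (χ₂ (v + w))⁻¹ = (χ₁ v * (χ₂ v)⁻¹) * (χ₁ w * (χ₂ w)⁻¹)) ∧
    (∀ v : KGrp g n k, χ₁ v * (χ₂ v)⁻¹ = 1 ∨ χ₁ v * (χ₂ v)⁻¹ = -1) ∧
    (∃ c : KGrp g n k, c + c = 0 ∧ ∀ v : KGrp g n k, χ₁ v = χ₂ v * en c v) ∧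
    (Odd n → χ₁ = χ₂) := by
  have : NeZero n := NeZero.of_pos hn
  have : HasEnoughRootsOfUnity k n := ⟨⟨ζ, hζ⟩, inferInstance⟩
  set ρ := h₁.ratio h₂
  have hρ_sq v : ρ v ^ 2 = 1 := ρ.sq_eq_one_of_map_neg (a := v) <| by
    rw [IsSemiChar.ratio_apply, IsSemiChar.ratio_apply, hs₁, hs₂]
  obtain ⟨c, hc⟩ := enChar_bijective.2 ρ
  have hχ v : χ₁ v = χ₂ v * en c v := by
    rw [← enChar_apply, hc, IsSemiChar.ratio_apply, mul_comm (χ₁ v), mul_inv_cancel_left]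
  have hc_two : c + c = 0 := enChar_injective <| AddChar.ext _ _ fun v => by
    rw [enChar_apply, en_add_left, ← enChar_apply, hc, ← sq, hρ_sq, enChar_apply, en_zero_left]
  refine ⟨h₁.mul_inv_map_add h₂, fun v => Units.sq_eq_one_iff.mp (hρ_sq v), ⟨c, hc_two, hχ⟩,
    fun hodd => funext fun v => ?_⟩
  have hc_zero : c = 0 := by
    have := gcd_nsmul_eq_zero.mpr ⟨(two_nsmul c).trans hc_two, nsmul_kGrp_eq_zero c⟩
    rwa [Nat.coprime_two_left.mpr hodd, one_nsmul] at this
  rw [hχ, hc_zero, en_zero_left, mul_one]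

/-- two symmetric `ψ̄`-semi-characters differ by a `{±1}`-valued
character of the form `e_n(c,·)` with `2c = 0`; in particular they coincide when
`n` is odd. -/
theorem symmetric_semichars_differ_by_two_torsion (g n : ℕ) (hg : 1 ≤ g) (hn : 1 ≤ n)
    (k : Type*) [Field k] (ζ : k) (hζ : IsPrimitiveRoot ζ n) (hchar : (n : k) ≠ 0)
    (ψ : KGrp g n k ≃+ KGrp g n k) (hψ : IsSymplectic ψ)
    (χ₁ χ₂ : KGrp g n k → kˣ)
    (h₁ : IsSemiChar (⇑ψ) χ₁) (h₂ : IsSemiChar (⇑ψ) χ₂)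
    (hs₁ : IsSymmChar χ₁) (hs₂ : IsSymmChar χ₂) :
    (∀ v w : KGrp g n k,
      χ₁ (v + w) * (χ₂ (v + w))⁻¹ = (χ₁ v * (χ₂ v)⁻¹) * (χ₁ w * (χ₂ w)⁻¹)) ∧
    (∀ v : KGrp g n k, χ₁ v * (χ₂ v)⁻¹ = 1 ∨ χ₁ v * (χ₂ v)⁻¹ = -1) ∧
    (∃ c : KGrp g n k, c + c = 0 ∧ ∀ v : KGrp g n k, χ₁ v = χ₂ v * en c v) ∧
    (Odd n → χ₁ = χ₂) :=
  symmetric_semichars_differ_by_two_torsion_general g n hn k ζ hζ ψ χ₁ χ₂ h₁ h₂ hs₁ hs₂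

end ThetaPaper
end
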